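/- Let X = (X⁺,X⁻) ∈ L with X⁺ ≠ 0 and X⁻ ≠ 0, let k ∈ {1,…,d}, and let z be a natural number with 1 ≤ z < min{B_X(1), S_X(d)}. (Cancellation of buy orders) If z ≤ X⁺_k, let X' = C(X⁺ − z·e_k, X⁻); then X' = (X⁺ − z·e_k, X⁻) ∈ L, and: if k = b(X) then b(X') = B_X⁻¹(z+1) and a(X') = a(X), while if k < b(X) (and z ≤ X⁺_k) or k = b(X) and z < X⁺_k, then b(X') = b(X) and a(X') = a(X). (Cancellation of sell orders) If z ≤ X⁻_k, let X' = C(X⁺, X⁻ − z·e_k); then X' = (X⁺, X⁻ − z·e_k) ∈ L, and: if k = a(X) then b(X') = b(X) and a(X') = S_X⁻¹(z+1), while if k > a(X) (and z ≤ X⁻_k) or k = a(X) and z < X⁻_k, then b(X') = b(X) and a(X') = a(X). -/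
import Mathlib


open scoped BigOperators

namespace OB

/-- The space of order configurations `E = ℕ^d × ℕ^d`: buy side and sell side. -/
abbrev E (d : ℕ) := (Fin d → ℕ) × (Fin d → ℕ)

/-- Price support of a vector: the set of prices `j ∈ {1,…,d}` with a positive queue. -/
def supp {d : ℕ} (Z : Fin d → ℕ) : Finset ℕ :=
  (Finset.univ.filter fun j : Fin d => 0 < Z j).image fun j : Fin d => (j : ℕ) + 1

/-- `sup supp`, with the convention `sup ∅ = 0`. -/
def supSupp {d : ℕ} (Z : Fin d → ℕ) : ℕ := (supp Z).sup id

/-- `inf supp`, with the convention `inf ∅ = d+1`. -/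
def infSupp {d : ℕ} (Z : Fin d → ℕ) : ℕ :=
  if h : (supp Z).Nonempty then (supp Z).min' h else d + 1

/-- bid price `b(X) = sup supp(X⁺)`. -/
def bid {d : ℕ} (X : E d) : ℕ := supSupp X.1

/-- ask price `a(X) = inf supp(X⁻)`. -/
def ask {d : ℕ} (X : E d) : ℕ := infSupp X.2

/-- Admissible limit order book configurations: `a(X) > b(X)`. -/
def Lset (d : ℕ) : Set (E d) := {X | bid X < ask X}

/-- Entry of a vector at price `i` (prices run from 1 to d; 0 outside this range). -/
def ent {d : ℕ} (z : Fin d → ℕ) (i : ℕ) : ℕ :=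
  if h : 1 ≤ i ∧ i ≤ d then z ⟨i - 1, by omega⟩ else 0

/-- Standard basis vector at price `i`. -/
def e {d : ℕ} (i : ℕ) : Fin d → ℕ := fun j => if (j : ℕ) + 1 = i then 1 else 0

/-- `τ_i`: zero out all entries at prices `> i`. -/
def tauLow {d : ℕ} (i : ℤ) (z : Fin d → ℕ) : Fin d → ℕ :=
  fun j => if ((j : ℕ) + 1 : ℤ) ≤ i then z j else 0

/-- `τ^i`: zero out all entries at prices `< i`. -/
def tauHigh {d : ℕ} (i : ℤ) (z : Fin d → ℕ) : Fin d → ℕ :=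
  fun j => if i ≤ ((j : ℕ) + 1 : ℤ) then z j else 0

/-- `B_X(k) = Σ_{i ≥ k} X⁺_i`. -/
def BX {d : ℕ} (X : E d) (k : ℕ) : ℕ := ∑ j : Fin d, if k ≤ (j : ℕ) + 1 then X.1 j else 0

/-- `S_X(k) = Σ_{i ≤ k} X⁻_i`. -/
def SX {d : ℕ} (X : E d) (k : ℕ) : ℕ := ∑ j : Fin d, if (j : ℕ) + 1 ≤ k then X.2 j else 0

/-- `g_X(k) = S_X(k) − B_X(k)`. -/
def gX {d : ℕ} (X : E d) (k : ℕ) : ℤ := (SX X k : ℤ) - (BX X k : ℤ)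

/-- `p_A(X) = inf{k ∈ {1,…,d} : g_X(k) > 0}`, convention `inf ∅ = d+1`. -/
def pA {d : ℕ} (X : E d) : ℕ :=
  if h : ((Finset.Icc 1 d).filter fun k => 0 < gX X k).Nonempty
  then ((Finset.Icc 1 d).filter fun k => 0 < gX X k).min' h else d + 1

/-- `p_B(X) = sup{k ∈ {1,…,d} : g_X(k) < 0}`, convention `sup ∅ = 0`. -/
def pB {d : ℕ} (X : E d) : ℕ :=
  ((Finset.Icc 1 d).filter fun k => gX X k < 0).sup id

/-- `B_X⁻¹(z) = sup{i ∈ {1,…,d} : B_X(i) ≥ z}`, convention `sup ∅ = 0`. -/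
def Binv {d : ℕ} (X : E d) (z : ℕ) : ℕ :=
  ((Finset.Icc 1 d).filter fun i => z ≤ BX X i).sup id

/-- `S_X⁻¹(z) = inf{i ∈ {1,…,d} : S_X(i) ≥ z}`, convention `inf ∅ = d+1`. -/
def Sinv {d : ℕ} (X : E d) (z : ℕ) : ℕ :=
  if h : ((Finset.Icc 1 d).filter fun i => z ≤ SX X i).Nonempty
  then ((Finset.Icc 1 d).filter fun i => z ≤ SX X i).min' h else d + 1

/-- Buy side after order-matching clearing (Eq. (11) of the paper):
`C(X)⁺ = τ_{p_B}(X⁺)` if `g_X(p_B) ≤ −X⁺_{p_B}`, and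
`C(X)⁺ = τ_{p_B−1}(X⁺) − min{0, g_X(p_B)}·e_{p_B}` otherwise. -/
def clearPlus {d : ℕ} (X : E d) : Fin d → ℕ :=
  if gX X (pB X) ≤ -(ent X.1 (pB X) : ℤ) then tauLow (pB X : ℤ) X.1
  else fun j => tauLow ((pB X : ℤ) - 1) X.1 j + (max 0 (-(gX X (pB X)))).toNat * e (pB X) j

/-- Sell side after order-matching clearing (Eq. (12) of the paper):
`C(X)⁻ = τ^{p_A}(X⁻)` if `g_X(p_A) ≥ X⁻_{p_A}`, and
`C(X)⁻ = τ^{p_A+1}(X⁻) + max{0, g_X(p_A)}·e_{p_A}` otherwise. -/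
def clearMinus {d : ℕ} (X : E d) : Fin d → ℕ :=
  if (ent X.2 (pA X) : ℤ) ≤ gX X (pA X) then tauHigh (pA X : ℤ) X.2
  else fun j => tauHigh ((pA X : ℤ) + 1) X.2 j + (max 0 (gX X (pA X))).toNat * e (pA X) j

/-- The order-matching clearing operator. -/
def clear {d : ℕ} (X : E d) : E d := (clearPlus X, clearMinus X)

/-- Price support of an integer-valued vector. -/
def suppZ {d : ℕ} (W : Fin d → ℤ) : Finset ℕ :=
  (Finset.univ.filter fun j : Fin d => 0 < W j).image fun j : Fin d => (j : ℕ) + 1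

/-- `sup supp` of an integer-valued vector, convention `sup ∅ = 0`. -/
def supSuppZ {d : ℕ} (W : Fin d → ℤ) : ℕ := (suppZ W).sup id

/-- `inf supp` of an integer-valued vector, convention `inf ∅ = d+1`. -/
def infSuppZ {d : ℕ} (W : Fin d → ℤ) : ℕ :=
  if h : (suppZ W).Nonempty then (suppZ W).min' h else d + 1

/-- `D : E → E` is an order-matching clearing operator: it maps into `L`, its fixed
points are exactly `L`, and, with `Z(X) = X − D(X)` (computed in `ℤ^d × ℤ^d`), the
conditions (A1)–(A4) of Definition 2.2 hold. -/
def IsOrderMatchingClearing {d : ℕ} (D : E d → E d) : Prop :=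
  (∀ X : E d, D X ∈ Lset d) ∧
  (∀ X : E d, X ∈ Lset d ↔ D X = X) ∧
  (∀ X : E d,
    -- (A1): the executed orders `Z(X) = X − D(X)` have nonnegative entries
    (∀ j, (D X).1 j ≤ X.1 j ∧ (D X).2 j ≤ X.2 j) ∧
    -- (A2): `|Z(X)⁺| = |Z(X)⁻|`
    (∑ j, ((X.1 j : ℤ) - ((D X).1 j : ℤ))) = (∑ j, ((X.2 j : ℤ) - ((D X).2 j : ℤ))) ∧
    -- (A3): `sup supp(Z(X)⁻) ≤ inf supp(Z(X)⁺)`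
    supSuppZ (fun j => (X.2 j : ℤ) - ((D X).2 j : ℤ)) ≤
      infSuppZ (fun j => (X.1 j : ℤ) - ((D X).1 j : ℤ)) ∧
    -- (A4): `sup supp(Z(X)⁻) ≤ inf supp(D(X)⁻)` and `inf supp(Z(X)⁺) ≥ sup supp(D(X)⁺)`
    supSuppZ (fun j => (X.2 j : ℤ) - ((D X).2 j : ℤ)) ≤ infSupp (D X).2 ∧
    supSupp (D X).1 ≤ infSuppZ (fun j => (X.1 j : ℤ) - ((D X).1 j : ℤ)))



section Aux
variable {d : ℕ}

lemma mem_supp_iff {Z : Fin d → ℕ} {j : Fin d} : ((j : ℕ) + 1) ∈ supp Z ↔ 0 < Z j := by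
  constructor
  · intro h
    simp only [supp, Finset.mem_image, Finset.mem_filter, Finset.mem_univ, true_and] at h
    obtain ⟨j', hj', he⟩ := h
    have : j' = j := Fin.ext (by omega)
    exact this ▸ hj'
  · intro h
    simp only [supp, Finset.mem_image, Finset.mem_filter, Finset.mem_univ, true_and]
    exact ⟨j, h, rfl⟩

lemma le_supSupp {Z : Fin d → ℕ} {j : Fin d} (h : 0 < Z j) : (j : ℕ) + 1 ≤ supSupp Z :=
  Finset.le_sup (f := id) (mem_supp_iff.mpr h)

lemma supSupp_le {Z : Fin d → ℕ} {n : ℕ} (h : ∀ j, 0 < Z j → (j : ℕ) + 1 ≤ n) :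
    supSupp Z ≤ n := by
  apply Finset.sup_le
  intro b hb
  simp only [supp, Finset.mem_image, Finset.mem_filter, Finset.mem_univ, true_and] at hb
  obtain ⟨j, hj, he⟩ := hb
  exact he ▸ h j hj

lemma supSupp_le_d (Z : Fin d → ℕ) : supSupp Z ≤ d :=
  supSupp_le fun j _ => j.isLt

lemma exists_supSupp {Z : Fin d → ℕ} (h : Z ≠ 0) :
    ∃ j : Fin d, (j : ℕ) + 1 = supSupp Z ∧ 0 < Z j := by
  have hne : (supp Z).Nonempty := by
    obtain ⟨j, hj⟩ := Function.ne_iff.mp h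
    exact ⟨(j : ℕ) + 1, mem_supp_iff.mpr (Nat.pos_of_ne_zero hj)⟩
  obtain ⟨b, hb, hbe⟩ := Finset.exists_mem_eq_sup _ hne id
  simp only [supp, Finset.mem_image, Finset.mem_filter, Finset.mem_univ, true_and] at hb
  obtain ⟨j, hj, he⟩ := hb
  refine ⟨j, ?_, hj⟩
  rw [supSupp, hbe]
  exact he

lemma infSupp_le {Z : Fin d → ℕ} {j : Fin d} (h : 0 < Z j) : infSupp Z ≤ (j : ℕ) + 1 := by
  have hm := mem_supp_iff.mpr h
  rw [infSupp, dif_pos ⟨_, hm⟩]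
  exact Finset.min'_le _ _ hm

lemma le_infSupp {Z : Fin d → ℕ} {n : ℕ} (hn : n ≤ d + 1)
    (h : ∀ j, 0 < Z j → n ≤ (j : ℕ) + 1) : n ≤ infSupp Z := by
  rw [infSupp]
  split
  · apply Finset.le_min'
    intro y hy
    simp only [supp, Finset.mem_image, Finset.mem_filter, Finset.mem_univ, true_and] at hy
    obtain ⟨j, hj, he⟩ := hy
    exact he ▸ h j hj
  · exact hn

lemma infSupp_le_succ (Z : Fin d → ℕ) : infSupp Z ≤ d + 1 := by
  rw [infSupp]
  split
  · next hne =>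
    obtain ⟨y, hy⟩ := hne
    have h1 := Finset.min'_le _ _ hy
    simp only [supp, Finset.mem_image, Finset.mem_filter, Finset.mem_univ, true_and] at hy
    obtain ⟨j, hj, he⟩ := hy
    have := j.isLt
    omega
  · exact le_rfl

lemma exists_infSupp {Z : Fin d → ℕ} (h : Z ≠ 0) :
    ∃ j : Fin d, (j : ℕ) + 1 = infSupp Z ∧ 0 < Z j := by
  have hne : (supp Z).Nonempty := by
    obtain ⟨j, hj⟩ := Function.ne_iff.mp h
    exact ⟨(j : ℕ) + 1, mem_supp_iff.mpr (Nat.pos_of_ne_zero hj)⟩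
  have hm := (supp Z).min'_mem hne
  simp only [supp, Finset.mem_image, Finset.mem_filter, Finset.mem_univ, true_and] at hm
  obtain ⟨j, hj, he⟩ := hm
  refine ⟨j, ?_, hj⟩
  rw [infSupp, dif_pos hne]
  exact he

lemma le_BX {X : E d} {i : ℕ} {j : Fin d} (h : i ≤ (j : ℕ) + 1) : X.1 j ≤ BX X i := by
  have := Finset.single_le_sum (f := fun j' : Fin d => if i ≤ (j' : ℕ) + 1 then X.1 j' else 0)
    (fun _ _ => Nat.zero_le _) (Finset.mem_univ j)
  simpa [BX, h] using this

lemma le_SX {X : E d} {i : ℕ} {j : Fin d} (h : (j : ℕ) + 1 ≤ i) : X.2 j ≤ SX X i := by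
  have := Finset.single_le_sum (f := fun j' : Fin d => if (j' : ℕ) + 1 ≤ i then X.2 j' else 0)
    (fun _ _ => Nat.zero_le _) (Finset.mem_univ j)
  simpa [SX, h] using this

lemma two_le_BX {X : E d} {j j' : Fin d} (hne : j ≠ j') {i : ℕ}
    (h : i ≤ (j : ℕ) + 1) (h' : i ≤ (j' : ℕ) + 1) : X.1 j + X.1 j' ≤ BX X i := by
  have hs := Finset.sum_le_sum_of_subset
    (f := fun j'' : Fin d => if i ≤ (j'' : ℕ) + 1 then X.1 j'' else 0)
    (Finset.subset_univ ({j, j'} : Finset (Fin d)))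
  rw [Finset.sum_pair hne] at hs
  simpa [BX, h, h'] using hs

lemma two_le_SX {X : E d} {j j' : Fin d} (hne : j ≠ j') {i : ℕ}
    (h : (j : ℕ) + 1 ≤ i) (h' : (j' : ℕ) + 1 ≤ i) : X.2 j + X.2 j' ≤ SX X i := by
  have hs := Finset.sum_le_sum_of_subset
    (f := fun j'' : Fin d => if (j'' : ℕ) + 1 ≤ i then X.2 j'' else 0)
    (Finset.subset_univ ({j, j'} : Finset (Fin d)))
  rw [Finset.sum_pair hne] at hs
  simpa [SX, h, h'] using hs

lemma SX_eq_zero {X : E d} {i : ℕ} (h : i < ask X) : SX X i = 0 := by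
  have ha : ask X = infSupp X.2 := rfl
  rw [SX]
  apply Finset.sum_eq_zero
  intro j _
  split
  · next hji =>
    by_contra hzz
    have h2 := infSupp_le (Z := X.2) (Nat.pos_of_ne_zero hzz)
    omega
  · rfl

lemma BX_eq_zero {X : E d} {i : ℕ} (h : bid X < i) : BX X i = 0 := by
  have hb : bid X = supSupp X.1 := rfl
  rw [BX]
  apply Finset.sum_eq_zero
  intro j _
  split
  · next hji =>
    by_contra hzz
    have h2 := le_supSupp (Z := X.1) (Nat.pos_of_ne_zero hzz)
    omega
  · rfl

lemma exists_pos_sub (A : Fin d → ℕ) (P : Fin d → Prop) [DecidablePred P] (k z : ℕ)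
    (h : z + 1 ≤ ∑ j : Fin d, if P j then A j else 0) :
    ∃ j : Fin d, P j ∧ 0 < A j - z * (if (j : ℕ) + 1 = k then 1 else 0) := by
  by_contra hc
  push_neg at hc
  have hbound : ∀ j : Fin d, (if P j then A j else 0) ≤ (if (j : ℕ) + 1 = k then z else 0) := by
    intro j
    by_cases hP : P j
    · have hj := hc j hP
      by_cases hk : (j : ℕ) + 1 = k
      · simp only [hk, if_true, if_pos, hP] at hj ⊢
        omega
      · simp only [hk, if_false, if_neg, hP, if_true] at hj ⊢
        omega
    · simp [hP]
  have h1 : (∑ j : Fin d, if P j then A j else 0) ≤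
      ∑ j : Fin d, if (j : ℕ) + 1 = k then z else 0 :=
    Finset.sum_le_sum fun j _ => hbound j
  have h2 : (∑ j : Fin d, if (j : ℕ) + 1 = k then z else 0) ≤ z := by
    rw [← Finset.sum_filter, Finset.sum_const, smul_eq_mul]
    have hcard : (Finset.univ.filter fun j : Fin d => (j : ℕ) + 1 = k).card ≤ 1 := by
      apply Finset.card_le_one.mpr
      intro a ha b hb
      simp only [Finset.mem_filter] at ha hb
      exact Fin.ext (by omega)
    calc (Finset.univ.filter fun j : Fin d => (j : ℕ) + 1 = k).card * z ≤ 1 * z :=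
          Nat.mul_le_mul_right z hcard
      _ = z := one_mul z
  omega

end Aux

section Fix
variable {d : ℕ}

lemma clearPlus_of_mem {X : E d} (hX : X ∈ Lset d) : clearPlus X = X.1 := by
  have hba : bid X < ask X := hX
  by_cases h0 : X.1 = 0
  · have hB : ∀ i, BX X i = 0 := by
      intro i
      rw [BX]
      apply Finset.sum_eq_zero
      intro j _
      split <;> simp [show X.1 j = 0 from congrFun h0 j]
    have hfil : ((Finset.Icc 1 d).filter fun i => gX X i < 0) = ∅ := by
      apply Finset.filter_eq_empty_iff.mpr
      intro i _
      simp only [not_lt, gX, hB i]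
      omega
    have hpB : pB X = 0 := by rw [pB, hfil]; rfl
    have hS0 : SX X 0 = 0 := by
      rw [SX]; apply Finset.sum_eq_zero; intro j _
      rw [if_neg (by omega)]
    have hcond : gX X (pB X) ≤ -(ent X.1 (pB X) : ℤ) := by
      rw [hpB, gX, hS0, hB]
      simp [ent]
    rw [clearPlus, if_pos hcond, hpB]
    funext j
    simp only [tauLow]
    split
    · rfl
    · exact (congrFun h0 j).symm
  · obtain ⟨j0, hj0, hj0pos⟩ := exists_supSupp h0
    have hj0b : (j0 : ℕ) + 1 = bid X := hj0
    have hbd : bid X ≤ d := supSupp_le_d _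
    have hpB : pB X = bid X := by
      apply le_antisymm
      · apply Finset.sup_le
        intro i hi
        simp only [Finset.mem_filter, Finset.mem_Icc] at hi
        by_contra hlt
        push_neg at hlt
        have hBz : BX X i = 0 := BX_eq_zero hlt
        have h2 := hi.2
        rw [gX, hBz] at h2
        omega
      · apply Finset.le_sup (f := id)
        simp only [Finset.mem_filter, Finset.mem_Icc]
        refine ⟨⟨by omega, hbd⟩, ?_⟩
        show gX X (bid X) < 0
        have hS : SX X (bid X) = 0 := SX_eq_zero hba
        have hBpos : 0 < BX X (bid X) := lt_of_lt_of_le hj0pos (le_BX (le_of_eq hj0b.symm))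
        rw [gX, hS]
        omega
    have hcond : gX X (pB X) ≤ -(ent X.1 (pB X) : ℤ) := by
      rw [hpB, gX, SX_eq_zero hba]
      have hent : ent X.1 (bid X) ≤ BX X (bid X) := by
        rw [ent]
        split
        · next hb => exact le_BX (by simp; omega)
        · exact Nat.zero_le _
      omega
    rw [clearPlus, if_pos hcond, hpB]
    funext j
    simp only [tauLow]
    split
    · rfl
    · next hgt =>
      by_contra hne
      have h2 := le_supSupp (Z := X.1) (j := j) (Nat.pos_of_ne_zero fun hq => hne (hq ▸ rfl))
      have hb : bid X = supSupp X.1 := rfl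
      omega

lemma clearMinus_of_mem {X : E d} (hX : X ∈ Lset d) : clearMinus X = X.2 := by
  have hba : bid X < ask X := hX
  by_cases h0 : X.2 = 0
  · have hS : ∀ i, SX X i = 0 := by
      intro i
      rw [SX]
      apply Finset.sum_eq_zero
      intro j _
      split <;> simp [show X.2 j = 0 from congrFun h0 j]
    have hfil : ((Finset.Icc 1 d).filter fun i => 0 < gX X i) = ∅ := by
      apply Finset.filter_eq_empty_iff.mpr
      intro i _
      simp only [not_lt, gX, hS i]
      omega
    have hpA : pA X = d + 1 := by
      rw [pA, dif_neg (by rw [hfil]; exact Finset.not_nonempty_empty)]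
    have hBd1 : BX X (d + 1) = 0 := by
      rw [BX]; apply Finset.sum_eq_zero; intro j _
      rw [if_neg (by have := j.isLt; omega)]
    have hcond : (ent X.2 (pA X) : ℤ) ≤ gX X (pA X) := by
      rw [hpA, gX, hS, hBd1]
      simp [ent]
    rw [clearMinus, if_pos hcond, hpA]
    funext j
    simp only [tauHigh]
    split
    · rfl
    · exact (congrFun h0 j).symm
  · obtain ⟨j0, hj0, hj0pos⟩ := exists_infSupp h0
    have hj0a : (j0 : ℕ) + 1 = ask X := hj0
    have ha1 : 1 ≤ ask X := by omega
    have had : ask X ≤ d := by have := j0.isLt; omega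
    have hmem : ask X ∈ (Finset.Icc 1 d).filter fun i => 0 < gX X i := by
      simp only [Finset.mem_filter, Finset.mem_Icc]
      refine ⟨⟨ha1, had⟩, ?_⟩
      have hB : BX X (ask X) = 0 := BX_eq_zero hba
      have hSpos : 0 < SX X (ask X) := lt_of_lt_of_le hj0pos (le_SX (le_of_eq hj0a))
      rw [gX, hB]
      omega
    have hnef : ((Finset.Icc 1 d).filter fun i => 0 < gX X i).Nonempty := ⟨_, hmem⟩
    have hpA : pA X = ask X := by
      rw [pA, dif_pos hnef]
      apply le_antisymm (Finset.min'_le _ _ hmem)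
      apply Finset.le_min'
      intro y hy
      simp only [Finset.mem_filter, Finset.mem_Icc] at hy
      by_contra hlt
      push_neg at hlt
      have hSz : SX X y = 0 := SX_eq_zero hlt
      have h2 := hy.2
      rw [gX, hSz] at h2
      omega
    have hcond : (ent X.2 (pA X) : ℤ) ≤ gX X (pA X) := by
      rw [hpA, gX, BX_eq_zero hba]
      have hent : ent X.2 (ask X) ≤ SX X (ask X) := by
        rw [ent]
        split
        · next hb => exact le_SX (by simp; omega)
        · exact Nat.zero_le _
      omega
    rw [clearMinus, if_pos hcond, hpA]
    funext j
    simp only [tauHigh]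
    split
    · rfl
    · next hlt =>
      by_contra hne
      have h2 := infSupp_le (Z := X.2) (j := j) (Nat.pos_of_ne_zero fun hq => hne (hq ▸ rfl))
      have ha : ask X = infSupp X.2 := rfl
      omega

lemma clear_of_mem {X : E d} (hX : X ∈ Lset d) : clear X = X := by
  rw [clear, clearPlus_of_mem hX, clearMinus_of_mem hX]

end Fix

/-- Proposition 2.5, Cases 3 and 4: cancellation of `z` buy
(resp. sell) orders at price `k`. -/
theorem clear_cancellation (d : ℕ) (hd : 1 ≤ d) (X : E d) (hX : X ∈ Lset d)
    (hplus : X.1 ≠ 0) (hminus : X.2 ≠ 0) (k z : ℕ) (hk : k ∈ Finset.Icc 1 d)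
    (hz1 : 1 ≤ z) (hz : z < min (BX X 1) (SX X d)) :
    -- Case 3: cancellation of `z` buy orders at price `k`
    (z ≤ ent X.1 k →
      clear (X.1 - z • e k, X.2) = (X.1 - z • e k, X.2) ∧
      (X.1 - z • e k, X.2) ∈ Lset d ∧
      (k = bid X →
        bid (clear (X.1 - z • e k, X.2)) = Binv X (z + 1) ∧
        ask (clear (X.1 - z • e k, X.2)) = ask X) ∧
      ((k < bid X ∨ (k = bid X ∧ z < ent X.1 k)) →
        bid (clear (X.1 - z • e k, X.2)) = bid X ∧
        ask (clear (X.1 - z • e k, X.2)) = ask X)) ∧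
    -- Case 4: cancellation of `z` sell orders at price `k`
    (z ≤ ent X.2 k →
      clear (X.1, X.2 - z • e k) = (X.1, X.2 - z • e k) ∧
      (X.1, X.2 - z • e k) ∈ Lset d ∧
      (k = ask X →
        bid (clear (X.1, X.2 - z • e k)) = bid X ∧
        ask (clear (X.1, X.2 - z • e k)) = Sinv X (z + 1)) ∧
      ((ask X < k ∨ (k = ask X ∧ z < ent X.2 k)) →
        bid (clear (X.1, X.2 - z • e k)) = bid X ∧
        ask (clear (X.1, X.2 - z • e k)) = ask X)) := by
  have hba : bid X < ask X := hX
  simp only [Finset.mem_Icc] at hk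
  rw [lt_min_iff] at hz
  obtain ⟨hzB, hzS⟩ := hz
  obtain ⟨hk1, hkd⟩ := hk
  have hkd' : k - 1 < d := by omega
  set jk : Fin d := ⟨k - 1, hkd'⟩ with hjkdef
  have hjk1 : (jk : ℕ) + 1 = k := by
    rw [hjkdef]
    show k - 1 + 1 = k
    omega
  constructor
  -- Case 3: buy cancellation
  · intro hzk
    have hentk : ent X.1 k = X.1 jk := by
      rw [ent, dif_pos (⟨hk1, hkd⟩ : 1 ≤ k ∧ k ≤ d)]
    rw [hentk] at hzk
    set Y1 : Fin d → ℕ := X.1 - z • e k with hY1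
    have hYval : ∀ j : Fin d, Y1 j = X.1 j - z * (if (j : ℕ) + 1 = k then 1 else 0) := by
      intro j
      rw [hY1]
      simp [e, Pi.sub_apply]
    have hYle : ∀ j, Y1 j ≤ X.1 j := by
      intro j; rw [hYval j]; omega
    have hYeq : ∀ j : Fin d, (j : ℕ) + 1 ≠ k → Y1 j = X.1 j := by
      intro j hj; rw [hYval j, if_neg hj]; omega
    have hYjk : Y1 jk = X.1 jk - z := by
      rw [hYval jk, if_pos hjk1]; omega
    have hbidle : bid (Y1, X.2) ≤ bid X :=
      supSupp_le fun j hj => le_supSupp (lt_of_lt_of_le hj (hYle j))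
    have hYL : (Y1, X.2) ∈ Lset d := lt_of_le_of_lt hbidle hba
    have hfix : clear (Y1, X.2) = (Y1, X.2) := clear_of_mem hYL
    have haskY : ask (clear (Y1, X.2)) = ask X := by rw [hfix]; rfl
    refine ⟨hfix, hYL, ?_, ?_⟩
    · intro hkb
      refine ⟨?_, haskY⟩
      rw [hfix]
      show supSupp Y1 = Binv X (z + 1)
      apply le_antisymm
      · apply supSupp_le
        intro j hj
        have hjd : (j : ℕ) + 1 ≤ d := j.isLt
        have hBj : z + 1 ≤ BX X ((j : ℕ) + 1) := by
          by_cases hc : (j : ℕ) + 1 = k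
          · have h1 : z + 1 ≤ X.1 j := by
              rw [hYval j, if_pos hc] at hj; omega
            exact le_trans h1 (le_BX le_rfl)
          · have hx : 0 < X.1 j := by rwa [hYeq j hc] at hj
            have hjb : (j : ℕ) + 1 ≤ bid X := le_supSupp hx
            have hne : j ≠ jk := fun h => hc (h ▸ hjk1)
            have h2 : X.1 j + X.1 jk ≤ BX X ((j : ℕ) + 1) :=
              two_le_BX hne le_rfl (by rw [hjk1]; omega)
            omega
        apply Finset.le_sup (f := id) (b := (j : ℕ) + 1)
        simp only [Finset.mem_filter, Finset.mem_Icc]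
        exact ⟨⟨by omega, hjd⟩, hBj⟩
      · apply Finset.sup_le
        intro i hi
        simp only [Finset.mem_filter, Finset.mem_Icc] at hi
        obtain ⟨⟨hi1, hid⟩, hiB⟩ := hi
        obtain ⟨j, hji, hjpos⟩ :=
          exists_pos_sub X.1 (fun j : Fin d => i ≤ (j : ℕ) + 1) k z (by simpa [BX] using hiB)
        have hpos : 0 < Y1 j := by rw [hYval j]; exact hjpos
        exact le_trans hji (le_supSupp hpos)
    · intro hcase
      refine ⟨?_, haskY⟩
      rw [hfix]
      apply le_antisymm hbidle
      obtain ⟨j0, hj0, hj0pos⟩ := exists_supSupp hplus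
      have hj0b : (j0 : ℕ) + 1 = bid X := hj0
      have hYpos : 0 < Y1 j0 := by
        rcases hcase with hlt | ⟨hkb, hzlt⟩
        · rw [hYeq j0 (by omega)]; exact hj0pos
        · have hj0jk : j0 = jk := Fin.ext (by simp [hjkdef]; omega)
          rw [hentk] at hzlt
          rw [hj0jk, hYjk]
          omega
      calc bid X = (j0 : ℕ) + 1 := hj0b.symm
        _ ≤ bid (Y1, X.2) := le_supSupp hYpos
  -- Case 4: sell cancellation
  · intro hzk
    have hentk : ent X.2 k = X.2 jk := by
      rw [ent, dif_pos (⟨hk1, hkd⟩ : 1 ≤ k ∧ k ≤ d)]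
    rw [hentk] at hzk
    set Y2 : Fin d → ℕ := X.2 - z • e k with hY2
    have hYval : ∀ j : Fin d, Y2 j = X.2 j - z * (if (j : ℕ) + 1 = k then 1 else 0) := by
      intro j
      rw [hY2]
      simp [e, Pi.sub_apply]
    have hYle : ∀ j, Y2 j ≤ X.2 j := by
      intro j; rw [hYval j]; omega
    have hYeq : ∀ j : Fin d, (j : ℕ) + 1 ≠ k → Y2 j = X.2 j := by
      intro j hj; rw [hYval j, if_neg hj]; omega
    have hYjk : Y2 jk = X.2 jk - z := by
      rw [hYval jk, if_pos hjk1]; omega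
    have haskge : ask X ≤ ask (X.1, Y2) :=
      le_infSupp (infSupp_le_succ X.2) fun j hj => infSupp_le (lt_of_lt_of_le hj (hYle j))
    have hYL : (X.1, Y2) ∈ Lset d := lt_of_lt_of_le hba haskge
    have hfix : clear (X.1, Y2) = (X.1, Y2) := clear_of_mem hYL
    have hbidY : bid (clear (X.1, Y2)) = bid X := by rw [hfix]; rfl
    refine ⟨hfix, hYL, ?_, ?_⟩
    · intro hka
      refine ⟨hbidY, ?_⟩
      rw [hfix]
      show infSupp Y2 = Sinv X (z + 1)
      have hfilne : ((Finset.Icc 1 d).filter fun i => z + 1 ≤ SX X i).Nonempty := by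
        refine ⟨d, ?_⟩
        simp only [Finset.mem_filter, Finset.mem_Icc]
        exact ⟨⟨hd, le_rfl⟩, hzS⟩
      apply le_antisymm
      · have hiS : Sinv X (z + 1) ∈ (Finset.Icc 1 d).filter fun i => z + 1 ≤ SX X i := by
          rw [Sinv, dif_pos hfilne]
          exact Finset.min'_mem _ _
        simp only [Finset.mem_filter, Finset.mem_Icc] at hiS
        obtain ⟨⟨hi1, hid⟩, hiS2⟩ := hiS
        obtain ⟨j, hji, hjpos⟩ :=
          exists_pos_sub X.2 (fun j : Fin d => (j : ℕ) + 1 ≤ Sinv X (z + 1)) k z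
            (by simpa [SX] using hiS2)
        have hpos : 0 < Y2 j := by rw [hYval j]; exact hjpos
        exact le_trans (infSupp_le hpos) hji
      · obtain ⟨j1, hj1d, hj1pos⟩ :=
          exists_pos_sub X.2 (fun j : Fin d => (j : ℕ) + 1 ≤ d) k z (by simpa [SX] using hzS)
        have hpos1 : 0 < Y2 j1 := by rw [hYval j1]; exact hj1pos
        have hY2ne : Y2 ≠ 0 := by
          intro h
          rw [congrFun h j1] at hpos1
          exact absurd hpos1 (lt_irrefl 0)
        obtain ⟨j', hj'e, hj'pos⟩ := exists_infSupp hY2ne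
        have hx : z + 1 ≤ SX X ((j' : ℕ) + 1) := by
          by_cases hc : (j' : ℕ) + 1 = k
          · have h1 : z + 1 ≤ X.2 j' := by
              rw [hYval j', if_pos hc] at hj'pos; omega
            exact le_trans h1 (le_SX le_rfl)
          · have hx2 : 0 < X.2 j' := by rwa [hYeq j' hc] at hj'pos
            have hasklej : ask X ≤ (j' : ℕ) + 1 := infSupp_le hx2
            have hne : j' ≠ jk := fun h => hc (h ▸ hjk1)
            have h2 : X.2 j' + X.2 jk ≤ SX X ((j' : ℕ) + 1) :=
              two_le_SX hne le_rfl (by rw [hjk1]; omega)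
            omega
        have hmem : (j' : ℕ) + 1 ∈ (Finset.Icc 1 d).filter fun i => z + 1 ≤ SX X i := by
          simp only [Finset.mem_filter, Finset.mem_Icc]
          exact ⟨⟨by omega, j'.isLt⟩, hx⟩
        calc Sinv X (z + 1) ≤ (j' : ℕ) + 1 := by
              rw [Sinv, dif_pos hfilne]
              exact Finset.min'_le _ _ hmem
          _ = infSupp Y2 := hj'e
    · intro hcase
      refine ⟨hbidY, ?_⟩
      rw [hfix]
      apply le_antisymm ?_ haskge
      obtain ⟨j0, hj0, hj0pos⟩ := exists_infSupp hminus
      have hj0a : (j0 : ℕ) + 1 = ask X := hj0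
      have hYpos : 0 < Y2 j0 := by
        rcases hcase with hlt | ⟨hka, hzlt⟩
        · rw [hYeq j0 (by omega)]; exact hj0pos
        · have hj0jk : j0 = jk := Fin.ext (by simp [hjkdef]; omega)
          rw [hentk] at hzlt
          rw [hj0jk, hYjk]
          omega
      calc ask (X.1, Y2) ≤ (j0 : ℕ) + 1 := infSupp_le hYpos
        _ = ask X := hj0a

end OB
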